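/- arXiv:2508.10570 — 3 statements merged into one kernel-verified Lean document; each statement's English description precedes it below -/
import Mathlib

section
/- If the signed area satisfies A > 0 and the stabilization parameter satisfies τ > 0, then the kernel of the first-order VEM element stiffness matrix K is exactly the span of the all-ones vector 𝟙 ∈ ℝ^N. Consequently, 0 is an eigenvalue of K of multiplicity exactly one, and all remaining eigenvalues of K are strictly positive. -/
open Matrix Real Filter

noncomputable section

/-- The boundary-integral vectors `a_i = (1/2)·(y_{i+1} − y_{i−1}, x_{i−1} − x_{i+1})`
of a planar polygon with cyclically indexed vertex coordinates. -/
def aVec (N : ℕ) (x y : ZMod N → ℝ) (i : ZMod N) : Fin 2 → ℝ :=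
  ![(y (i + 1) - y (i - 1)) / 2, (x (i - 1) - x (i + 1)) / 2]

/-- The signed (shoelace) area `A = (1/2)·Σ_i (x_i y_{i+1} − x_{i+1} y_i)`. -/
def shoelace (N : ℕ) [NeZero N] (x y : ZMod N → ℝ) : ℝ :=
  (1 / 2) * ∑ i : ZMod N, (x i * y (i + 1) - x (i + 1) * y i)

/-- The `3×N` matrix `B` of the first-order VEM. -/
def Bmat (N : ℕ) (x y : ZMod N → ℝ) (h : ℝ) : Matrix (Fin 3) (ZMod N) ℝ :=
  Matrix.of fun α i => ![(1 : ℝ) / N, aVec N x y i 0 / h, aVec N x y i 1 / h] α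

/-- The `N×3` matrix `D` of the first-order VEM, `D_{iα} = m_α(x_i, y_i)` with scaled
monomials `m₁ = 1`, `m₂ = (x − x_K)/h`, `m₃ = (y − y_K)/h`. -/
def Dmat (N : ℕ) (x y : ZMod N → ℝ) (h xK yK : ℝ) : Matrix (ZMod N) (Fin 3) ℝ :=
  Matrix.of fun i α => ![(1 : ℝ), (x i - xK) / h, (y i - yK) / h] α

/-- `G = diag(1, A/h², A/h²)`. -/
def Gmat (N : ℕ) [NeZero N] (x y : ZMod N → ℝ) (h : ℝ) : Matrix (Fin 3) (Fin 3) ℝ :=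
  Matrix.diagonal ![1, shoelace N x y / h ^ 2, shoelace N x y / h ^ 2]

/-- `G̃ = diag(0, A/h², A/h²)`. -/
def Gtil (N : ℕ) [NeZero N] (x y : ZMod N → ℝ) (h : ℝ) : Matrix (Fin 3) (Fin 3) ℝ :=
  Matrix.diagonal ![0, shoelace N x y / h ^ 2, shoelace N x y / h ^ 2]

/-- `Π* = G⁻¹·B`. -/
def PiStar (N : ℕ) [NeZero N] (x y : ZMod N → ℝ) (h : ℝ) : Matrix (Fin 3) (ZMod N) ℝ :=
  (Gmat N x y h)⁻¹ * Bmat N x y h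

/-- `Π = D·Π*`. -/
def PiMat (N : ℕ) [NeZero N] (x y : ZMod N → ℝ) (h xK yK : ℝ) :
    Matrix (ZMod N) (ZMod N) ℝ :=
  Dmat N x y h xK yK * PiStar N x y h

/-- The consistency part `K^consis = Π*ᵀ·G̃·Π*` of the VEM element stiffness matrix. -/
def Kconsis (N : ℕ) [NeZero N] (x y : ZMod N → ℝ) (h : ℝ) :
    Matrix (ZMod N) (ZMod N) ℝ :=
  (PiStar N x y h)ᵀ * Gtil N x y h * PiStar N x y h

/-- The first-order VEM element stiffness matrix
`K = Π*ᵀ·G̃·Π* + τ·(I − Π)ᵀ·(I − Π)`. -/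
def Kmat (N : ℕ) [NeZero N] (x y : ZMod N → ℝ) (h τ xK yK : ℝ) :
    Matrix (ZMod N) (ZMod N) ℝ :=
  Kconsis N x y h +
    τ • ((1 - PiMat N x y h xK yK)ᵀ * (1 - PiMat N x y h xK yK))

/- Both summands of `K` are positive semidefinite, being congruences `Π*ᵀ G̃ Π*` and
`(I − Π)ᵀ (I − Π)` of positive semidefinite matrices, so all eigenvalues of `K` are
nonnegative, and `K v = 0` holds exactly when `G̃ Π* v = 0` and `Π v = v`. Since `A ≠ 0`, the
first condition kills the two linear coefficients of `Π* v`, so `v = Π v = D Π* v` is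
constant. Conversely `Σ a_i = 0` gives `B 𝟙 = e₁`, hence `Π* 𝟙 = e₁` and `Π 𝟙 = 𝟙`. -/

open scoped ComplexOrder

namespace Matrix

variable {n 𝕜 : Type*} [Fintype n] [RCLike 𝕜]

theorem PosSemidef.add_mulVec_eq_zero_iff {A B : Matrix n n 𝕜} (hA : A.PosSemidef)
    (hB : B.PosSemidef) (v : n → 𝕜) :
    (A + B) *ᵥ v = 0 ↔ A *ᵥ v = 0 ∧ B *ᵥ v = 0 := by
  refine ⟨fun h => ?_, fun ⟨hAv, hBv⟩ => by rw [add_mulVec, hAv, hBv, add_zero]⟩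
  have hsum : star v ⬝ᵥ A *ᵥ v + star v ⬝ᵥ B *ᵥ v = 0 := by
    rw [← dotProduct_add, ← add_mulVec, h, dotProduct_zero]
  obtain ⟨hAv, hBv⟩ := (add_eq_zero_iff_of_nonneg (hA.dotProduct_mulVec_nonneg v)
    (hB.dotProduct_mulVec_nonneg v)).mp hsum
  exact ⟨(hA.dotProduct_mulVec_zero_iff v).mp hAv, (hB.dotProduct_mulVec_zero_iff v).mp hBv⟩

theorem PosSemidef.conjTranspose_mul_mul_same_mulVec_eq_zero_iff {m : Type*} [Fintype m]
    {A : Matrix m m 𝕜} (hA : A.PosSemidef) (B : Matrix m n 𝕜) (v : n → 𝕜) :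
    (Bᴴ * A * B) *ᵥ v = 0 ↔ A *ᵥ (B *ᵥ v) = 0 := by
  rw [← (hA.conjTranspose_mul_mul_same B).dotProduct_mulVec_zero_iff,
    ← hA.dotProduct_mulVec_zero_iff, ← mulVec_mulVec, ← mulVec_mulVec, dotProduct_mulVec,
    vecMul_conjTranspose, star_star]

theorem PosSemidef.nonneg_of_hasEigenvalue [DecidableEq n] {A : Matrix n n 𝕜}
    (hA : A.PosSemidef) {μ : 𝕜} (hμ : Module.End.HasEigenvalue (toLin' A) μ) : 0 ≤ μ :=
  (posSemidef_iff_isHermitian_and_spectrum_nonneg.mp hA).2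
    (by rwa [← spectrum_toLin', ← Module.End.hasEigenvalue_iff_mem_spectrum])

end Matrix

theorem Fintype.sum_comp_add_right {G M : Type*} [AddGroup G] [Fintype G] [AddCommMonoid M]
    (f : G → M) (a : G) : ∑ i, f (i + a) = ∑ i, f i :=
  Fintype.sum_equiv (Equiv.addRight a) _ _ fun _ => rfl

theorem Fintype.sum_comp_sub_right {G M : Type*} [AddGroup G] [Fintype G] [AddCommMonoid M]
    (f : G → M) (a : G) : ∑ i, f (i - a) = ∑ i, f i :=
  Fintype.sum_equiv (Equiv.subRight a) _ _ fun _ => rfl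

section VEM

variable {N : ℕ} (x y : ZMod N → ℝ) {h : ℝ} (xK yK : ℝ)

theorem Dmat_mulVec_apply (w : Fin 3 → ℝ) (i : ZMod N) :
    (Dmat N x y h xK yK *ᵥ w) i = w 0 + (x i - xK) / h * w 1 + (y i - yK) / h * w 2 := by
  simp [Dmat, mulVec, dotProduct, Fin.sum_univ_three]

variable [NeZero N]

theorem sum_aVec (j : Fin 2) : ∑ i, aVec N x y i j = 0 := by
  fin_cases j <;>
    simp [aVec, ← Finset.sum_div, Finset.sum_sub_distrib, Fintype.sum_comp_add_right,
      Fintype.sum_comp_sub_right]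

theorem Bmat_mulVec_one : Bmat N x y h *ᵥ (fun _ => 1) = ![1, 0, 0] := by
  funext α
  fin_cases α <;> simp [Bmat, mulVec, dotProduct, ← Finset.sum_div, sum_aVec]

theorem Gmat_inv (hh : h ≠ 0) (hA : shoelace N x y ≠ 0) :
    (Gmat N x y h)⁻¹ = diagonal ![1, h ^ 2 / shoelace N x y, h ^ 2 / shoelace N x y] := by
  refine inv_eq_right_inv ?_
  rw [Gmat, diagonal_mul_diagonal, ← diagonal_one]
  congr 1
  funext α
  fin_cases α <;> simp [hh, hA]

theorem PiStar_mulVec_one (hh : h ≠ 0) (hA : shoelace N x y ≠ 0) :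
    PiStar N x y h *ᵥ (fun _ => 1) = ![1, 0, 0] := by
  funext α
  rw [PiStar, ← mulVec_mulVec, Bmat_mulVec_one, Gmat_inv x y hh hA, mulVec_diagonal]
  fin_cases α <;> simp

theorem PiMat_mulVec_one (hh : h ≠ 0) (hA : shoelace N x y ≠ 0) :
    PiMat N x y h xK yK *ᵥ (fun _ => 1) = fun _ => 1 := by
  funext i
  rw [PiMat, ← mulVec_mulVec, PiStar_mulVec_one x y hh hA, Dmat_mulVec_apply]
  simp

theorem Gtil_mulVec_eq_zero_iff (hh : h ≠ 0) (hA : shoelace N x y ≠ 0) (w : Fin 3 → ℝ) :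
    Gtil N x y h *ᵥ w = 0 ↔ w 1 = 0 ∧ w 2 = 0 := by
  simp [Gtil, mulVec_diagonal, funext_iff, Fin.forall_fin_succ, hh, hA]

theorem posSemidef_Gtil (hA : 0 ≤ shoelace N x y) : (Gtil N x y h).PosSemidef := by
  have hAh : 0 ≤ shoelace N x y / h ^ 2 := by positivity
  exact PosSemidef.diagonal fun α => by fin_cases α <;> simp [hAh]

theorem Kmat_mulVec_eq_zero_iff {τ : ℝ} (hA : 0 ≤ shoelace N x y) (hτ : 0 < τ)
    (v : ZMod N → ℝ) :
    Kmat N x y h τ xK yK *ᵥ v = 0 ↔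
      Gtil N x y h *ᵥ (PiStar N x y h *ᵥ v) = 0 ∧ PiMat N x y h xK yK *ᵥ v = v := by
  have hS := posSemidef_conjTranspose_mul_self (1 - PiMat N x y h xK yK)
  rw [Kmat, Kconsis, ← conjTranspose_eq_transpose_of_trivial,
    ← conjTranspose_eq_transpose_of_trivial,
    ((posSemidef_Gtil x y hA).conjTranspose_mul_mul_same _).add_mulVec_eq_zero_iff
      (hS.smul hτ.le),
    (posSemidef_Gtil x y hA).conjTranspose_mul_mul_same_mulVec_eq_zero_iff, smul_mulVec,
    smul_eq_zero_iff_right hτ.ne', conjTranspose_mul_self_mulVec_eq_zero, sub_mulVec,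
    one_mulVec, sub_eq_zero, eq_comm (a := v)]

theorem posSemidef_Kmat {τ : ℝ} (hA : 0 ≤ shoelace N x y) (hτ : 0 ≤ τ) :
    (Kmat N x y h τ xK yK).PosSemidef := by
  rw [Kmat, Kconsis, ← conjTranspose_eq_transpose_of_trivial,
    ← conjTranspose_eq_transpose_of_trivial]
  exact ((posSemidef_Gtil x y hA).conjTranspose_mul_mul_same _).add
    ((posSemidef_conjTranspose_mul_self _).smul hτ)

theorem ker_toLin'_Kmat {τ : ℝ} (hh : h ≠ 0) (hA : 0 < shoelace N x y) (hτ : 0 < τ) :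
    LinearMap.ker (toLin' (Kmat N x y h τ xK yK)) = Submodule.span ℝ {fun _ => 1} := by
  ext v
  rw [LinearMap.mem_ker, toLin'_apply, Kmat_mulVec_eq_zero_iff x y xK yK hA.le hτ,
    Gtil_mulVec_eq_zero_iff x y hh hA.ne', Submodule.mem_span_singleton]
  constructor
  · rintro ⟨⟨hw₁, hw₂⟩, hv⟩
    refine ⟨(PiStar N x y h *ᵥ v) 0, funext fun i => ?_⟩
    rw [← congrFun hv i, PiMat, ← mulVec_mulVec, Dmat_mulVec_apply, hw₁, hw₂]
    simp
  · rintro ⟨c, rfl⟩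
    refine ⟨by simp [mulVec_smul, PiStar_mulVec_one x y hh hA.ne'], ?_⟩
    rw [mulVec_smul, PiMat_mulVec_one x y xK yK hh hA.ne']

end VEM

theorem stmt2_general (N : ℕ) [NeZero N] (x y : ZMod N → ℝ)
    (h τ xK yK : ℝ) (hh : 0 < h) (hA : 0 < shoelace N x y) (hτ : 0 < τ) :
    LinearMap.ker (Matrix.toLin' (Kmat N x y h τ xK yK)) =
      Submodule.span ℝ {(fun _ => 1 : ZMod N → ℝ)} ∧
    Module.finrank ℝ
      ↥(Module.End.eigenspace (Matrix.toLin' (Kmat N x y h τ xK yK)) 0) = 1 ∧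
    (∀ μ : ℝ, Module.End.HasEigenvalue (Matrix.toLin' (Kmat N x y h τ xK yK)) μ →
      μ ≠ 0 → 0 < μ) := by
  have hker := ker_toLin'_Kmat x y xK yK hh.ne' hA hτ
  refine ⟨hker, ?_, fun μ hμ hμ₀ => ?_⟩
  · rw [Module.End.eigenspace_zero, hker]
    exact finrank_span_singleton (Function.ne_iff.mpr ⟨0, one_ne_zero⟩)
  · exact ((posSemidef_Kmat x y xK yK hA.le hτ.le).nonneg_of_hasEigenvalue hμ).lt_of_ne' hμ₀

/-- If `A > 0` and `τ > 0` then the kernel of the first-order VEM element stiffness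
matrix `K` is exactly the span of the all-ones vector; consequently `0` is an eigenvalue
of multiplicity exactly one and every other eigenvalue is strictly positive. -/
theorem stmt2 (N : ℕ) [NeZero N] (hN : 3 ≤ N) (x y : ZMod N → ℝ)
    (h τ xK yK : ℝ) (hh : 0 < h) (hA : 0 < shoelace N x y) (hτ : 0 < τ) :
    LinearMap.ker (Matrix.toLin' (Kmat N x y h τ xK yK)) =
      Submodule.span ℝ {(fun _ => 1 : ZMod N → ℝ)} ∧
    Module.finrank ℝ
      ↥(Module.End.eigenspace (Matrix.toLin' (Kmat N x y h τ xK yK)) 0) = 1 ∧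
    (∀ μ : ℝ, Module.End.HasEigenvalue (Matrix.toLin' (Kmat N x y h τ xK yK)) μ →
      μ ≠ 0 → 0 < μ) :=
  stmt2_general N x y h τ xK yK hh hA hτ

end
end

section
/- If the point (x_K, y_K) is taken to be the vertex centroid, i.e., x_K = (1/N)·Σ_{i=1}^N x_i and y_K = (1/N)·Σ_{i=1}^N y_i, then the matrix identity B·D = G holds, where G = diag(1, A/h², A/h²); this is the consistency identity G = BD used as a check in numerical implementations of the first-order virtual element method. -/
open Matrix Real Filter

noncomputable section

/-- If `(x_K, y_K)` is the vertex centroid, then the consistency identity `B·D = G`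
holds for the first-order VEM matrices. -/
theorem stmt3 (N : ℕ) [NeZero N] (hN : 3 ≤ N) (x y : ZMod N → ℝ)
    (h xK yK : ℝ) (hh : 0 < h)
    (hxK : xK = (∑ i : ZMod N, x i) / N) (hyK : yK = (∑ i : ZMod N, y i) / N) :
    Bmat N x y h * Dmat N x y h xK yK = Gmat N x y h := by
  have hN0 : (N : ℝ) ≠ 0 := Nat.cast_ne_zero.2 (NeZero.ne N)
  have hh0 : h ≠ 0 := ne_of_gt hh
  have shift : ∀ f : ZMod N → ℝ, ∑ i : ZMod N, f (i + 1) = ∑ i : ZMod N, f i :=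
    fun f => Fintype.sum_equiv (Equiv.addRight 1) _ _ fun i => rfl
  have shift' : ∀ f : ZMod N → ℝ, ∑ i : ZMod N, f (i - 1) = ∑ i : ZMod N, f i :=
    fun f => Fintype.sum_equiv (Equiv.subRight 1) _ _ fun i => rfl
  have sdiff : ∀ f : ZMod N → ℝ, ∑ i : ZMod N, (f (i + 1) - f (i - 1)) = 0 := by
    intro f
    rw [Finset.sum_sub_distrib, shift, shift', sub_self]
  have pz : ∀ f : ZMod N → ℝ, ∑ i : ZMod N, (f (i + 1) - f (i - 1)) * f i = 0 := by
    intro f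
    have h1 : ∑ i : ZMod N, f (i - 1) * f i = ∑ i : ZMod N, f i * f (i + 1) :=
      Fintype.sum_equiv (Equiv.subRight 1) _ _ fun i => by simp
    simp only [sub_mul, Finset.sum_sub_distrib, h1]
    have h2 : ∑ i : ZMod N, f (i + 1) * f i = ∑ i : ZMod N, f i * f (i + 1) := by
      exact Finset.sum_congr rfl fun i _ => mul_comm _ _
    rw [h2, sub_self]
  have cz : ∀ f : ZMod N → ℝ, ∑ i : ZMod N, (f i - (∑ j : ZMod N, f j) / N) = 0 := by
    intro f
    rw [Finset.sum_sub_distrib, Finset.sum_const, Finset.card_univ, ZMod.card,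
      nsmul_eq_mul, mul_div_cancel₀ _ hN0, sub_self]
  have twoAx : ∑ i : ZMod N, (y (i + 1) - y (i - 1)) * x i
      = ∑ i : ZMod N, (x i * y (i + 1) - x (i + 1) * y i) := by
    have h1 : ∑ i : ZMod N, y (i - 1) * x i = ∑ i : ZMod N, y i * x (i + 1) :=
      Fintype.sum_equiv (Equiv.subRight 1) _ _ fun i => by simp
    simp only [sub_mul, Finset.sum_sub_distrib, h1]
    congr 1
    · exact Finset.sum_congr rfl fun i _ => mul_comm _ _
    · exact Finset.sum_congr rfl fun i _ => mul_comm _ _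
  have twoAy : ∑ i : ZMod N, (x (i - 1) - x (i + 1)) * y i
      = ∑ i : ZMod N, (x i * y (i + 1) - x (i + 1) * y i) := by
    have h1 : ∑ i : ZMod N, x (i - 1) * y i = ∑ i : ZMod N, x i * y (i + 1) :=
      Fintype.sum_equiv (Equiv.subRight 1) _ _ fun i => by simp
    simp only [sub_mul, Finset.sum_sub_distrib, h1]
  ext α β
  fin_cases α <;> fin_cases β <;>
    simp [Bmat, Dmat, Gmat, aVec, shoelace, Matrix.mul_apply, Matrix.diagonal,
      hxK, hyK]
  case _ =>
    calc ∑ i : ZMod N, (↑N)⁻¹ * ((x i - (∑ j : ZMod N, x j) / ↑N) / h)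
        = (∑ i : ZMod N, (x i - (∑ j : ZMod N, x j) / ↑N)) * ((↑N)⁻¹ / h) := by
          rw [Finset.sum_mul]; exact Finset.sum_congr rfl fun i _ => by ring
      _ = 0 := by rw [cz]; ring
  case _ =>
    calc ∑ i : ZMod N, (↑N)⁻¹ * ((y i - (∑ j : ZMod N, y j) / ↑N) / h)
        = (∑ i : ZMod N, (y i - (∑ j : ZMod N, y j) / ↑N)) * ((↑N)⁻¹ / h) := by
          rw [Finset.sum_mul]; exact Finset.sum_congr rfl fun i _ => by ring
      _ = 0 := by rw [cz]; ring
  case _ =>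
    calc ∑ i : ZMod N, (y (i + 1) - y (i - 1)) / 2 / h
        = (∑ i : ZMod N, (y (i + 1) - y (i - 1))) * (1 / (2 * h)) := by
          rw [Finset.sum_mul]; exact Finset.sum_congr rfl fun i _ => by ring
      _ = 0 := by rw [sdiff]; ring
  case _ =>
    calc ∑ i : ZMod N, (y (i + 1) - y (i - 1)) / 2 / h * ((x i - (∑ j : ZMod N, x j) / ↑N) / h)
        = (∑ i : ZMod N, (y (i + 1) - y (i - 1)) * x i) * (1 / (2 * h ^ 2))
          - (∑ i : ZMod N, (y (i + 1) - y (i - 1))) * ((∑ j : ZMod N, x j) / ↑N / (2 * h ^ 2)) := by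
          rw [Finset.sum_mul, Finset.sum_mul, ← Finset.sum_sub_distrib]
          exact Finset.sum_congr rfl fun i _ => by ring
      _ = 2⁻¹ * (∑ i : ZMod N, x i * y (i + 1) - ∑ i : ZMod N, x (i + 1) * y i) / h ^ 2 := by
          rw [twoAx, sdiff, Finset.sum_sub_distrib]; ring
  case _ =>
    calc ∑ i : ZMod N, (y (i + 1) - y (i - 1)) / 2 / h * ((y i - (∑ j : ZMod N, y j) / ↑N) / h)
        = (∑ i : ZMod N, (y (i + 1) - y (i - 1)) * y i) * (1 / (2 * h ^ 2))
          - (∑ i : ZMod N, (y (i + 1) - y (i - 1))) * ((∑ j : ZMod N, y j) / ↑N / (2 * h ^ 2)) := by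
          rw [Finset.sum_mul, Finset.sum_mul, ← Finset.sum_sub_distrib]
          exact Finset.sum_congr rfl fun i _ => by ring
      _ = 0 := by rw [pz, sdiff]; ring
  case _ =>
    calc ∑ i : ZMod N, (x (i - 1) - x (i + 1)) / 2 / h
        = (∑ i : ZMod N, (x (i + 1) - x (i - 1))) * (-1 / (2 * h)) := by
          rw [Finset.sum_mul]; exact Finset.sum_congr rfl fun i _ => by ring
      _ = 0 := by rw [sdiff]; ring
  case _ =>
    calc ∑ i : ZMod N, (x (i - 1) - x (i + 1)) / 2 / h * ((x i - (∑ j : ZMod N, x j) / ↑N) / h)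
        = -((∑ i : ZMod N, (x (i + 1) - x (i - 1)) * x i) * (1 / (2 * h ^ 2)))
          + (∑ i : ZMod N, (x (i + 1) - x (i - 1))) * ((∑ j : ZMod N, x j) / ↑N / (2 * h ^ 2)) := by
          rw [Finset.sum_mul, Finset.sum_mul, neg_add_eq_sub, ← Finset.sum_sub_distrib]
          exact Finset.sum_congr rfl fun i _ => by ring
      _ = 0 := by rw [pz, sdiff]; ring
  case _ =>
    calc ∑ i : ZMod N, (x (i - 1) - x (i + 1)) / 2 / h * ((y i - (∑ j : ZMod N, y j) / ↑N) / h)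
        = (∑ i : ZMod N, (x (i - 1) - x (i + 1)) * y i) * (1 / (2 * h ^ 2))
          + (∑ i : ZMod N, (x (i + 1) - x (i - 1))) * ((∑ j : ZMod N, y j) / ↑N / (2 * h ^ 2)) := by
          rw [Finset.sum_mul, Finset.sum_mul, ← Finset.sum_add_distrib]
          exact Finset.sum_congr rfl fun i _ => by ring
      _ = 2⁻¹ * (∑ i : ZMod N, x i * y (i + 1) - ∑ i : ZMod N, x (i + 1) * y i) / h ^ 2 := by
          rw [twoAy, sdiff, Finset.sum_sub_distrib]; ring

end
end

section
/- If the signed area A ≠ 0 and (x_K, y_K) is the vertex centroid (x_K = (1/N)·Σ x_i, y_K = (1/N)·Σ y_i), then Π*·D = I₃ (the 3×3 identity matrix), and consequently the N×N matrix Π = D·Π* is idempotent (Π² = Π) and satisfies Π·D = D; that is, the elliptic projection matrix Π of the first-order VEM is a projection that reproduces the nodal vectors of affine functions. -/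
/-!
Since `Π = D Π*`, idempotence and `Π D = D` follow formally from `Π* D = I`, i.e. from
`B D = G`. The entries of `B D` are discrete versions of `∫_K ∇ m_β`: the first row averages
the monomials over the vertices, which vanishes at the centroid, while the `a_i` are the
boundary-integration weights of the polygon, so that `Σ a_i = 0` by telescoping and
`Σ_i a_i (x_i, y_i)ᵀ = A · I` by cyclic summation by parts, which produces the shoelace formula.
-/

open Matrix Real Filter

noncomputable section

theorem Finset.sum_sub_average {ι K : Type*} [Fintype ι] [Nonempty ι] [Field K] [CharZero K]
    (f : ι → K) : ∑ i, (f i - (∑ j, f j) / Fintype.card ι) = 0 := by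
  rw [Finset.sum_sub_distrib, Finset.sum_const, Finset.card_univ, nsmul_eq_mul,
    mul_div_cancel₀ _ (Nat.cast_ne_zero.mpr Fintype.card_ne_zero), sub_self]

theorem Finset.sum_div_mul_sub_div {ι K : Type*} [Fintype ι] [Field K] {p : ι → K}
    (hp : ∑ i, p i = 0) (g : ι → K) (c h : K) :
    ∑ i, p i / h * ((g i - c) / h) = (∑ i, p i * g i) / h ^ 2 := by
  have hsummand : ∀ i, p i / h * ((g i - c) / h) = p i * g i / h ^ 2 - c / h ^ 2 * p i :=
    fun i ↦ by ring
  simp only [hsummand, Finset.sum_sub_distrib, ← Finset.sum_div, ← Finset.mul_sum, hp, mul_zero,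
    sub_zero]

theorem Matrix.isIdempotentElem_mul_of_mul_eq_one {m n R : Type*} [Fintype m] [Fintype n]
    [DecidableEq m] [Semiring R] {P : Matrix m n R} {D : Matrix n m R} (h : P * D = 1) :
    IsIdempotentElem (D * P) := by
  rw [IsIdempotentElem, Matrix.mul_assoc, ← Matrix.mul_assoc P, h, Matrix.one_mul]

theorem Matrix.mul_mul_eq_of_mul_eq_one {m n R : Type*} [Fintype m] [Fintype n] [DecidableEq m]
    [Semiring R] {P : Matrix m n R} {D : Matrix n m R} (h : P * D = 1) : D * P * D = D := by
  rw [Matrix.mul_assoc, h, Matrix.mul_one]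

namespace ZMod

variable {N : ℕ} [NeZero N]

theorem sum_comp_add_one {M : Type*} [AddCommMonoid M] (f : ZMod N → M) :
    ∑ i, f (i + 1) = ∑ i, f i :=
  Equiv.sum_comp (Equiv.addRight 1) f

theorem sum_comp_sub_one {M : Type*} [AddCommMonoid M] (f : ZMod N → M) :
    ∑ i, f (i - 1) = ∑ i, f i :=
  Equiv.sum_comp (Equiv.subRight 1) f

theorem sum_add_one_sub_sub_one {M : Type*} [AddCommGroup M] (f : ZMod N → M) :
    ∑ i, (f (i + 1) - f (i - 1)) = 0 := by
  rw [Finset.sum_sub_distrib, sum_comp_add_one, sum_comp_sub_one, sub_self]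

theorem sum_add_one_sub_sub_one_mul {R : Type*} [CommRing R] (f g : ZMod N → R) :
    ∑ i, (f (i + 1) - f (i - 1)) * g i = ∑ i, (f (i + 1) * g i - f i * g (i + 1)) := by
  simp_rw [sub_mul, Finset.sum_sub_distrib, ← sum_comp_add_one fun i ↦ f (i - 1) * g i,
    add_sub_cancel_right]

theorem sum_add_one_sub_sub_one_mul_self {R : Type*} [CommRing R] (f : ZMod N → R) :
    ∑ i, (f (i + 1) - f (i - 1)) * f i = 0 := by
  rw [sum_add_one_sub_sub_one_mul]
  simp [mul_comm]

end ZMod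

section Polygon

variable (N : ℕ) [NeZero N] (x y : ZMod N → ℝ)

theorem sum_aVec_apply (k : Fin 2) : ∑ i, aVec N x y i k = 0 := by
  fin_cases k <;> simp [aVec, ← Finset.sum_div, ZMod.sum_comp_add_one, ZMod.sum_comp_sub_one]

theorem sum_aVec_zero_mul (g : ZMod N → ℝ) :
    ∑ i, aVec N x y i 0 * g i = (∑ i, (y (i + 1) - y (i - 1)) * g i) / 2 := by
  simp [aVec, div_mul_eq_mul_div, Finset.sum_div]

theorem sum_aVec_one_mul (g : ZMod N → ℝ) :
    ∑ i, aVec N x y i 1 * g i = -(∑ i, (x (i + 1) - x (i - 1)) * g i) / 2 := by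
  simp only [aVec, Matrix.cons_val_one, Matrix.cons_val_zero]
  simp_rw [← neg_sub (x (_ + 1)), neg_div, neg_mul, Finset.sum_neg_distrib, div_mul_eq_mul_div,
    ← Finset.sum_div]

theorem sum_aVec_zero_mul_x : ∑ i, aVec N x y i 0 * x i = shoelace N x y := by
  simp only [sum_aVec_zero_mul, ZMod.sum_add_one_sub_sub_one_mul, shoelace, mul_comm (y _)]
  ring

theorem sum_aVec_zero_mul_y : ∑ i, aVec N x y i 0 * y i = 0 := by
  simp [sum_aVec_zero_mul, ZMod.sum_add_one_sub_sub_one_mul_self]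

theorem sum_aVec_one_mul_x : ∑ i, aVec N x y i 1 * x i = 0 := by
  simp [sum_aVec_one_mul, ZMod.sum_add_one_sub_sub_one_mul_self]

theorem sum_aVec_one_mul_y : ∑ i, aVec N x y i 1 * y i = shoelace N x y := by
  simp only [sum_aVec_one_mul, ZMod.sum_add_one_sub_sub_one_mul, shoelace,
    ← Finset.sum_neg_distrib, neg_sub]
  ring

end Polygon

theorem Bmat_mul_Dmat (N : ℕ) [NeZero N] (x y : ZMod N → ℝ) (h : ℝ)
    {xK yK : ℝ} (hxK : xK = (∑ i, x i) / N) (hyK : yK = (∑ i, y i) / N) :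
    Bmat N x y h * Dmat N x y h xK yK = Gmat N x y h := by
  have hx : ∑ i, (x i - xK) = 0 := by simpa [hxK] using Finset.sum_sub_average x
  have hy : ∑ i, (y i - yK) = 0 := by simpa [hyK] using Finset.sum_sub_average y
  ext α β
  fin_cases α <;> fin_cases β <;>
    simp [Matrix.mul_apply, Bmat, Dmat, Gmat, Matrix.diagonal,
      Finset.sum_div_mul_sub_div (sum_aVec_apply N x y _), sum_aVec_zero_mul_x,
      sum_aVec_zero_mul_y, sum_aVec_one_mul_x, sum_aVec_one_mul_y, ← Finset.mul_sum,
      ← Finset.sum_div, sum_aVec_apply, hx, hy]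

theorem stmt4_general (N : ℕ) [NeZero N] (x y : ZMod N → ℝ)
    (h xK yK : ℝ) (hh : 0 < h) (hA : shoelace N x y ≠ 0)
    (hxK : xK = (∑ i : ZMod N, x i) / N) (hyK : yK = (∑ i : ZMod N, y i) / N) :
    PiStar N x y h * Dmat N x y h xK yK = 1 ∧
    PiMat N x y h xK yK * PiMat N x y h xK yK = PiMat N x y h xK yK ∧
    PiMat N x y h xK yK * Dmat N x y h xK yK = Dmat N x y h xK yK := by
  have hG : IsUnit (Gmat N x y h).det := by
    have hA' : shoelace N x y / h ^ 2 ≠ 0 := div_ne_zero hA (pow_ne_zero 2 hh.ne')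
    rw [← Matrix.isUnit_iff_isUnit_det, Gmat, Matrix.isUnit_diagonal, Pi.isUnit_iff]
    intro k; fin_cases k <;> simp [hA']
  have hPD : PiStar N x y h * Dmat N x y h xK yK = 1 := by
    rw [PiStar, Matrix.mul_assoc, Bmat_mul_Dmat N x y h hxK hyK, Matrix.nonsing_inv_mul _ hG]
  exact ⟨hPD, Matrix.isIdempotentElem_mul_of_mul_eq_one hPD,
    Matrix.mul_mul_eq_of_mul_eq_one hPD⟩

/-- If `A ≠ 0` and `(x_K, y_K)` is the vertex centroid, then `Π*·D = I₃`, and hence the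
elliptic projection matrix `Π = D·Π*` is idempotent and satisfies `Π·D = D`. -/
theorem stmt4 (N : ℕ) [NeZero N] (hN : 3 ≤ N) (x y : ZMod N → ℝ)
    (h xK yK : ℝ) (hh : 0 < h) (hA : shoelace N x y ≠ 0)
    (hxK : xK = (∑ i : ZMod N, x i) / N) (hyK : yK = (∑ i : ZMod N, y i) / N) :
    PiStar N x y h * Dmat N x y h xK yK = 1 ∧
    PiMat N x y h xK yK * PiMat N x y h xK yK = PiMat N x y h xK yK ∧
    PiMat N x y h xK yK * Dmat N x y h xK yK = Dmat N x y h xK yK :=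
  stmt4_general N x y h xK yK hh hA hxK hyK

end
end
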